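/- Let ρ(u) = (2/√(1−2u))·artanh(√(1−2u)) (analytic near u = 1, with ρ(1) = π/2) and set β(u) = (π/2)/ρ(u), so β(1) = 1. Then β'(1) = 1 − 2/π and β''(1) = 8/π² − 1, and consequently the variability constant v(β) := β''(1)/β(1) + β'(1)/β(1) − (β'(1)/β(1))² equals 4/π² + 2/π − 1, which is nonzero. -/

import Mathlib

/-!
Writing `s` for a square root of `1 - 2u`, the formula for `ρ` says `exp (s ρ) = (1 + s)/(1 - s)`,
an identity that is insensitive to the sign of `s`. Near `u = 1` the root can therefore be taken
holomorphic, with `s s' = -1`, and differentiating the identity gives the linear ODE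
`u (1 - 2u) ρ' = u ρ - 1`. At `u = 1` the ODE and its derivative yield `ρ'(1) = 1 - π/2` and
`ρ''(1) = 3π/2 - 4`, and the quotient rule turns these into the values of `β'(1)` and `β''(1)`.
-/

open Complex Filter Topology

/-- A branch of `√(1 - 2u)`, holomorphic wherever `2u - 1 ∈ slitPlane`, hence near `u = 1`. -/
noncomputable def sqrtOneSubTwoMul (u : ℂ) : ℂ := I * (2 * u - 1) ^ (2⁻¹ : ℂ)

lemma sqrtOneSubTwoMul_sq (u : ℂ) : sqrtOneSubTwoMul u ^ 2 = 1 - 2 * u := by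
  rw [sqrtOneSubTwoMul, mul_pow, cpow_ofNat_inv_pow, I_sq]
  ring

lemma differentiableAt_sqrtOneSubTwoMul {u : ℂ} (hu : 2 * u - 1 ∈ slitPlane) :
    DifferentiableAt ℂ sqrtOneSubTwoMul u :=
  ((((hasDerivAt_id u).const_mul 2).sub_const 1).cpow_const hu).differentiableAt.const_mul I

lemma mul_deriv_eq_neg_one_of_sq_eq {S : ℂ → ℂ} {u : ℂ} (hS : DifferentiableAt ℂ S u)
    (hsq : ∀ v, S v ^ 2 = 1 - 2 * v) : S u * deriv S u = -1 := by
  have h := deriv_fun_pow hS 2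
  rw [funext hsq, deriv_const_sub, deriv_const_mul_field', deriv_id''] at h
  norm_num at h
  linear_combination -h / 2

lemma one_add_ne_zero_and_one_sub_ne_zero_of_sq_eq {x u : ℂ} (hu : u ≠ 0)
    (hx : x ^ 2 = 1 - 2 * u) : 1 + x ≠ 0 ∧ 1 - x ≠ 0 :=
  mul_ne_zero_iff.1 <| by
    rw [show (1 + x) * (1 - x) = 2 * u by linear_combination -hx]
    exact mul_ne_zero two_ne_zero hu

lemma exp_mul_eq_of_sq_eq {u s t r : ℂ} (hu : u ≠ 0) (hs : s ^ 2 = 1 - 2 * u) (hs0 : s ≠ 0)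
    (hr : r = s⁻¹ * log ((1 + s) / (1 - s))) (ht : t ^ 2 = 1 - 2 * u) :
    exp (t * r) = (1 + t) / (1 - t) := by
  obtain ⟨hs1, hs2⟩ := one_add_ne_zero_and_one_sub_ne_zero_of_sq_eq hu hs
  have hsr : exp (s * r) = (1 + s) / (1 - s) := by
    rw [hr, ← mul_assoc, mul_inv_cancel₀ hs0, one_mul, exp_log (div_ne_zero hs1 hs2)]
  rcases sq_eq_sq_iff_eq_or_eq_neg.1 (ht.trans hs.symm) with rfl | rfl
  · exact hsr
  · rw [neg_mul, exp_neg, hsr, inv_div]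
    ring

lemma ode_of_exp_mul_eventuallyEq {S ρ : ℂ → ℂ} {u : ℂ} (hS : DifferentiableAt ℂ S u)
    (hρ : DifferentiableAt ℂ ρ u) (hsq : ∀ v, S v ^ 2 = 1 - 2 * v) (hSu : 1 - S u ≠ 0)
    (hexp : (fun v => exp (S v * ρ v)) =ᶠ[𝓝 u] fun v => (1 + S v) / (1 - S v)) :
    u * (1 - 2 * u) * deriv ρ u = u * ρ u - 1 := by
  have hSS := mul_deriv_eq_neg_one_of_sq_eq hS hsq
  have hL : HasDerivAt (fun v => exp (S v * ρ v))
      (exp (S u * ρ u) * (deriv S u * ρ u + S u * deriv ρ u)) u :=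
    (hS.hasDerivAt.mul hρ.hasDerivAt).cexp
  have hR : HasDerivAt (fun v => (1 + S v) / (1 - S v))
      ((deriv S u * (1 - S u) - (1 + S u) * -deriv S u) / (1 - S u) ^ 2) u :=
    (hS.hasDerivAt.const_add 1).div (hS.hasDerivAt.const_sub 1) hSu
  have key := hL.unique (hR.congr_of_eventuallyEq hexp)
  rw [hexp.eq_of_nhds] at key
  field_simp at key
  linear_combination (S u / 2) * key - ((1 - S u ^ 2) * ρ u / 2 - 1) * hSS
    - (ρ u + (2 * u - S u ^ 2) * deriv ρ u) / 2 * hsq u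

lemma eventually_ode_of_log_formula {ε : ℝ} (hε : 0 < ε) {ρ : ℂ → ℂ}
    (hρan : AnalyticOnNhd ℂ ρ (Metric.ball 1 ε))
    (hρform : ∀ u ∈ Metric.ball (1 : ℂ) ε, ∃ s : ℂ, s ^ 2 = 1 - 2 * u ∧ s ≠ 0 ∧
      ρ u = s⁻¹ * log ((1 + s) / (1 - s))) :
    ∀ᶠ u in 𝓝 (1 : ℂ), u * (1 - 2 * u) * deriv ρ u = u * ρ u - 1 := by
  have hball : ∀ᶠ u in 𝓝 (1 : ℂ), u ∈ Metric.ball 1 ε :=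
    Metric.isOpen_ball.mem_nhds (Metric.mem_ball_self hε)
  have hslit : ∀ᶠ u in 𝓝 (1 : ℂ), 2 * u - 1 ∈ slitPlane :=
    (isOpen_slitPlane.preimage (by fun_prop)).mem_nhds (by norm_num)
  have hne : ∀ᶠ u in 𝓝 (1 : ℂ), u ≠ 0 := eventually_ne_nhds one_ne_zero
  have hexp : ∀ᶠ u in 𝓝 (1 : ℂ),
      exp (sqrtOneSubTwoMul u * ρ u) = (1 + sqrtOneSubTwoMul u) / (1 - sqrtOneSubTwoMul u) := by
    filter_upwards [hball, hne] with u hu hu0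
    obtain ⟨s, hs, hs0, hρu⟩ := hρform u hu
    exact exp_mul_eq_of_sq_eq hu0 hs hs0 hρu (sqrtOneSubTwoMul_sq u)
  filter_upwards [hball, hslit, hne, hexp.eventually_nhds] with u hu hu2 hu0 hexpu
  exact ode_of_exp_mul_eventuallyEq (differentiableAt_sqrtOneSubTwoMul hu2)
    (hρan u hu).differentiableAt sqrtOneSubTwoMul_sq
    (one_add_ne_zero_and_one_sub_ne_zero_of_sq_eq hu0 (sqrtOneSubTwoMul_sq u)).2 hexpu

section

variable {𝕜 : Type*} [NontriviallyNormedField 𝕜] {f : 𝕜 → 𝕜}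

lemma deriv_eq_of_ode (hf : DifferentiableAt 𝕜 f 1) (hf' : DifferentiableAt 𝕜 (deriv f) 1)
    (hode : ∀ᶠ u in 𝓝 (1 : 𝕜), u * (1 - 2 * u) * deriv f u = u * f u - 1) :
    deriv f 1 = 1 - f 1 ∧ deriv (deriv f) 1 = 3 * f 1 - 4 := by
  have h1 : deriv f 1 = 1 - f 1 := by linear_combination -hode.self_of_nhds
  have hL : HasDerivAt (fun u => u * (1 - 2 * u) * deriv f u)
      ((1 * (1 - 2 * 1) + 1 * -(2 * 1)) * deriv f 1 + 1 * (1 - 2 * 1) * deriv (deriv f) 1) 1 :=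
    ((hasDerivAt_id' 1).mul (((hasDerivAt_id' 1).const_mul 2).const_sub 1)).mul hf'.hasDerivAt
  have hR : HasDerivAt (fun u => u * f u - 1) (1 * f 1 + 1 * deriv f 1) 1 :=
    ((hasDerivAt_id' 1).mul hf.hasDerivAt).sub_const 1
  have h2 := hL.unique (hR.congr_of_eventuallyEq hode)
  exact ⟨h1, by linear_combination -h2 - 4 * h1⟩

lemma deriv_deriv_const_div (c : 𝕜) {x : 𝕜} (hf : ∀ᶠ u in 𝓝 x, DifferentiableAt 𝕜 f u)
    (hf' : DifferentiableAt 𝕜 (deriv f) x) (hx : f x ≠ 0) :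
    deriv (deriv fun u => c / f u) x
      = c * (2 * deriv f x ^ 2 - f x * deriv (deriv f) x) / f x ^ 3 := by
  have hne : ∀ᶠ u in 𝓝 x, f u ≠ 0 := hf.self_of_nhds.continuousAt.eventually_ne hx
  have hderiv : deriv (fun u => c / f u) =ᶠ[𝓝 x] fun u => -c * deriv f u / f u ^ 2 := by
    filter_upwards [hf, hne] with u hu hu0
    exact deriv_const_div c hu hu0
  rw [hderiv.deriv_eq, deriv_fun_div (hf'.const_mul _) (hf.self_of_nhds.fun_pow 2) (pow_ne_zero 2 hx),
    deriv_const_mul _ hf', deriv_fun_pow hf.self_of_nhds]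
  field_simp
  ring

end

lemma Real.pi_sq_lt_two_mul_pi_add_four : Real.pi ^ 2 < 2 * Real.pi + 4 := by
  nlinarith [Real.pi_lt_d2, Real.pi_gt_three]

/-- if `ρ` is analytic near `u = 1` with `ρ(1) = π/2` and
`ρ(u) = (2/√(1−2u))·artanh(√(1−2u)) = (1/√(1−2u))·log((1+√(1−2u))/(1−√(1−2u)))`
(for a square root `s` of `1−2u`), then with `β(u) = (π/2)/ρ(u)` one has
`β(1) = 1`, `β'(1) = 1 − 2/π`, `β''(1) = 8/π² − 1`, and the variability constant
`v(β) = β''(1)/β(1) + β'(1)/β(1) − (β'(1)/β(1))²` equals `4/π² + 2/π − 1 ≠ 0`. -/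
theorem variability_constant (ε : ℝ) (hε : 0 < ε) (ρ : ℂ → ℂ)
    (hρan : AnalyticOnNhd ℂ ρ (Metric.ball (1 : ℂ) ε))
    (hρ1 : ρ 1 = (Real.pi : ℂ) / 2)
    (hρform : ∀ u ∈ Metric.ball (1 : ℂ) ε, ∃ s : ℂ, s ^ 2 = 1 - 2 * u ∧ s ≠ 0 ∧
      ρ u = s⁻¹ * Complex.log ((1 + s) / (1 - s))) :
    (fun u : ℂ => ((Real.pi : ℂ) / 2) / ρ u) 1 = 1 ∧
    deriv (fun u : ℂ => ((Real.pi : ℂ) / 2) / ρ u) 1 = 1 - 2 / (Real.pi : ℂ) ∧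
    deriv (deriv (fun u : ℂ => ((Real.pi : ℂ) / 2) / ρ u)) 1
      = 8 / (Real.pi : ℂ) ^ 2 - 1 ∧
    deriv (deriv (fun u : ℂ => ((Real.pi : ℂ) / 2) / ρ u)) 1
          / (fun u : ℂ => ((Real.pi : ℂ) / 2) / ρ u) 1
        + deriv (fun u : ℂ => ((Real.pi : ℂ) / 2) / ρ u) 1
          / (fun u : ℂ => ((Real.pi : ℂ) / 2) / ρ u) 1
        - (deriv (fun u : ℂ => ((Real.pi : ℂ) / 2) / ρ u) 1
          / (fun u : ℂ => ((Real.pi : ℂ) / 2) / ρ u) 1) ^ 2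
      = 4 / (Real.pi : ℂ) ^ 2 + 2 / (Real.pi : ℂ) - 1 ∧
    (4 / Real.pi ^ 2 + 2 / Real.pi - 1 : ℝ) ≠ 0 := by
  have h1 : (1 : ℂ) ∈ Metric.ball 1 ε := Metric.mem_ball_self hε
  have hρd : ∀ᶠ u in 𝓝 (1 : ℂ), DifferentiableAt ℂ ρ u := by
    filter_upwards [Metric.isOpen_ball.mem_nhds h1] with u hu using (hρan u hu).differentiableAt
  have hρ'd : DifferentiableAt ℂ (deriv ρ) 1 := (hρan.deriv 1 h1).differentiableAt
  obtain ⟨hd1, hd2⟩ :=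
    deriv_eq_of_ode hρd.self_of_nhds hρ'd (eventually_ode_of_log_formula hε hρan hρform)
  have hπ : (Real.pi : ℂ) ≠ 0 := ofReal_ne_zero.2 Real.pi_ne_zero
  have hρ1ne : ρ 1 ≠ 0 := by simp [hρ1, hπ]
  have hβ : (fun u : ℂ => ((Real.pi : ℂ) / 2) / ρ u) 1 = 1 := by
    show (Real.pi : ℂ) / 2 / ρ 1 = 1
    rw [hρ1, div_self (div_ne_zero hπ two_ne_zero)]
  have hβ' : deriv (fun u : ℂ => ((Real.pi : ℂ) / 2) / ρ u) 1 = 1 - 2 / (Real.pi : ℂ) := by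
    rw [deriv_const_div _ hρd.self_of_nhds hρ1ne, hd1, hρ1]
    field_simp
    ring
  have hβ'' : deriv (deriv (fun u : ℂ => ((Real.pi : ℂ) / 2) / ρ u)) 1
      = 8 / (Real.pi : ℂ) ^ 2 - 1 := by
    rw [deriv_deriv_const_div _ hρd hρ'd hρ1ne, hd2, hd1, hρ1]
    field_simp
    ring
  refine ⟨hβ, hβ', hβ'', ?_, ?_⟩
  · rw [hβ, hβ', hβ'']
    ring
  · rw [show 4 / Real.pi ^ 2 + 2 / Real.pi - 1 = (2 * Real.pi + 4 - Real.pi ^ 2) / Real.pi ^ 2 by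
      field_simp; ring]
    exact div_ne_zero (by linarith [Real.pi_sq_lt_two_mul_pi_add_four])
      (pow_ne_zero 2 Real.pi_ne_zero)
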